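/- arXiv:1506.00350 — 2 statements merged into one kernel-verified Lean document; each statement's English description precedes it below -/
import Mathlib

section
/- Let φ(x) = ∑_{n≥0} αₙ xⁿ be a formal power series with complex coefficients such that α₀ = 1 and there exists n ≥ 2 with n!·αₙ ≠ α₁ⁿ (i.e., φ is not of the form e^{γx}). Set p = min{n ≥ 2 : n!·αₙ ≠ α₁ⁿ}, α = α₁, and β = αₚ − α₁ᵖ/p!. Let f be a monic complex polynomial of degree d, and for each positive integer m define the polynomial f_m by f_m(x) = m^{−d/p}·(φ(D)^m f)(m^{1/p}x − mα), where m^{1/p} is the positive real p-th root of m. Then f_m → exp(βD^p)M^d uniformly on compact subsets of ℂ as m → ∞. -/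
/-!
Write `φ = e^{αX} ψ`; by the minimality of `p`, `ψ = 1 + X^p τ` with `τ(0) = β`. Since `e^{cD}`
is the shift by `c`, `(φ(D)^m f)(y - mα) = (ψ(D)^m f)(y)`. In `ψ^m = ∑ᵢ C(m,i) (X^p τ)^i` the
`i`-th term starts at degree `ip`, and `C(m,i) ~ mⁱ/i!`, so `m^{-n/p} [Xⁿ] ψ^m` tends to the `n`-th
coefficient of `exp(βX^p)`. Hence every coefficient of `f_m` converges to the corresponding
coefficient of `exp(βD^p) Xᵈ`, and coefficientwise convergence of polynomials of bounded degree is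
locally uniform.
-/

open Polynomial Nat

/-- `φ(D)f = ∑ₙ αₙ f⁽ⁿ⁾` (a finite sum). -/
noncomputable def phiD (α : ℕ → ℂ) (f : Polynomial ℂ) : Polynomial ℂ :=
  ∑ n ∈ Finset.range (f.natDegree + 1), α n • (Polynomial.derivative^[n] f)

/-- The polynomial `exp(βD^p)M^d`, i.e. `∑_{k=0}^{⌊d/p⌋} (d!·βᵏ/(k!·(d−pk)!))·x^{d−pk}`. -/
noncomputable def expD (β : ℂ) (p d : ℕ) : Polynomial ℂ :=
  ∑ k ∈ Finset.range (d / p + 1),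
    Polynomial.C ((d ! : ℂ) * β ^ k / ((k ! : ℂ) * ((d - p * k)! : ℂ))) *
      Polynomial.X ^ (d - p * k)

open Filter Finset Topology Asymptotics
open scoped PowerSeries

section DiffOp

variable {R : Type*} [CommSemiring R]

/-- The operator `g(D)` on polynomials, for any power series `g`. -/
noncomputable def diffOp (g : R⟦X⟧) (f : R[X]) : R[X] :=
  ∑ n ∈ range (f.natDegree + 1), PowerSeries.coeff n g • derivative^[n] f

theorem diffOp_eq_sum {g : R⟦X⟧} {f : R[X]} {N : ℕ} (h : f.natDegree ≤ N) :
    diffOp g f = ∑ n ∈ range (N + 1), PowerSeries.coeff n g • derivative^[n] f :=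
  sum_subset (range_subset_range.2 (by omega)) fun n _ hn => by
    rw [iterate_derivative_eq_zero (by simp at hn; omega), smul_zero]

theorem natDegree_diffOp_le (g : R⟦X⟧) (f : R[X]) : (diffOp g f).natDegree ≤ f.natDegree :=
  natDegree_sum_le_of_forall_le _ _ fun n _ =>
    (natDegree_smul_le _ _).trans ((natDegree_iterate_derivative f n).trans (Nat.sub_le _ _))

theorem coeff_diffOp {g : R⟦X⟧} {f : R[X]} {N : ℕ} (h : f.natDegree ≤ N) (k : ℕ) :
    (diffOp g f).coeff k = ∑ n ∈ range (N + 1),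
      PowerSeries.coeff n g * ((k + n).descFactorial n * f.coeff (k + n)) := by
  simp [diffOp_eq_sum h, coeff_iterate_derivative, nsmul_eq_mul]

theorem diffOp_one (f : R[X]) : diffOp 1 f = f := by
  rw [diffOp, sum_eq_single 0 (fun n _ hn => by simp [PowerSeries.coeff_one, hn]) (by simp)]
  simp

theorem diffOp_mul (g h : R⟦X⟧) (f : R[X]) : diffOp (g * h) f = diffOp g (diffOp h f) := by
  set N := f.natDegree
  let T : ℕ → ℕ → R[X] := fun i j =>
    (PowerSeries.coeff i g * PowerSeries.coeff j h) • derivative^[i + j] f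
  have hT : ∀ i j, N < i + j → T i j = 0 := fun i j hij => by
    simp only [T, iterate_derivative_eq_zero hij, smul_zero]
  calc diffOp (g * h) f = ∑ n ∈ range (N + 1), ∑ i ∈ range (n + 1), T i (n - i) := by
        refine sum_congr rfl fun n _ => ?_
        rw [PowerSeries.coeff_mul, Nat.sum_antidiagonal_eq_sum_range_succ_mk, sum_smul]
        refine sum_congr rfl fun i hi => ?_
        simp only [T, Nat.add_sub_cancel' (by simpa [Nat.lt_succ_iff] using hi)]
    _ = ∑ i ∈ range (N + 1), ∑ j ∈ range (N + 1 - i), T i j := sum_range_diag_flip _ T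
    _ = ∑ i ∈ range (N + 1), ∑ j ∈ range (N + 1), T i j :=
        sum_congr rfl fun i _ => sum_subset (range_subset_range.2 (by omega)) fun j _ hj =>
          hT i j (by simp at hj; omega)
    _ = diffOp g (diffOp h f) := by
        rw [diffOp_eq_sum (natDegree_diffOp_le h f)]
        refine sum_congr rfl fun i _ => ?_
        simp only [diffOp, iterate_derivative_sum, smul_sum, iterate_derivative_smul, smul_smul,
          T, Function.iterate_add_apply, N]

theorem diffOp_pow (g : R⟦X⟧) (m : ℕ) (f : R[X]) : diffOp (g ^ m) f = (diffOp g)^[m] f := by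
  induction m with
  | zero => rw [pow_zero, diffOp_one, Function.iterate_zero_apply]
  | succ m ih => rw [_root_.pow_succ', diffOp_mul, ih, Function.iterate_succ_apply']

theorem coeff_one_add_pow {σ : R⟦X⟧} (hσ : PowerSeries.X ∣ σ) (m n : ℕ) :
    PowerSeries.coeff n ((1 + σ) ^ m) =
      ∑ i ∈ range (n + 1), (m.choose i : R) * PowerSeries.coeff n (σ ^ i) := by
  let F i := (m.choose i : R) * PowerSeries.coeff n (σ ^ i)
  have hσi : ∀ i, n < i → PowerSeries.coeff n (σ ^ i) = 0 := fun i hi =>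
    PowerSeries.X_pow_dvd_iff.1 (pow_dvd_pow_of_dvd hσ i) n hi
  calc PowerSeries.coeff n ((1 + σ) ^ m) = ∑ i ∈ range (m + 1), F i := by
        simp only [F, add_comm (1 : R⟦X⟧), add_pow, one_pow, mul_one, map_sum]
        refine sum_congr rfl fun i _ => ?_
        rw [← map_natCast PowerSeries.C, PowerSeries.coeff_mul_C, mul_comm]
    _ = ∑ i ∈ range (m + n + 1), F i :=
        sum_subset (range_subset_range.2 (by omega)) fun i _ hi => by
          simp [F, Nat.choose_eq_zero_of_lt (show m < i by simp at hi; omega)]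
    _ = ∑ i ∈ range (n + 1), F i :=
        (sum_subset (range_subset_range.2 (by omega)) fun i _ hi => by
          simp [F, hσi i (show n < i by simp at hi; omega)]).symm

end DiffOp

section Exp

variable {K : Type*} [Field K] [CharZero K]

theorem coeff_rescale_exp (c : K) (n : ℕ) :
    PowerSeries.coeff n (PowerSeries.rescale c (PowerSeries.exp K)) = c ^ n / n ! := by
  simp [PowerSeries.coeff_rescale, PowerSeries.coeff_exp, div_eq_mul_inv]

theorem eval_diffOp_rescale_exp (c y : K) (f : K[X]) :
    (diffOp (PowerSeries.rescale c (PowerSeries.exp K)) f).eval y = f.eval (y + c) := by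
  -- Taylor's formula at `y`
  rw [add_comm, ← taylor_eval, eval_eq_sum_range' (p := taylor y f) (n := f.natDegree + 1)
    (by simp), diffOp, eval_finsetSum]
  refine sum_congr rfl fun n _ => ?_
  rw [taylor_coeff, eval_smul, coeff_rescale_exp, ← factorial_smul_hasseDeriv, LinearMap.smul_apply,
    eval_smul, nsmul_eq_mul, smul_eq_mul]
  field_simp [n.factorial_ne_zero]

theorem eval_sub_diffOp_rescale_exp_mul_pow (c y : K) (ψ : K⟦X⟧) (m : ℕ) (f : K[X]) :
    (diffOp ((PowerSeries.rescale c (PowerSeries.exp K) * ψ) ^ m) f).eval (y - m * c) =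
      (diffOp (ψ ^ m) f).eval y := by
  rw [mul_pow, ← map_pow, PowerSeries.exp_pow_eq_rescale_exp, PowerSeries.rescale_rescale,
    diffOp_mul, eval_diffOp_rescale_exp, sub_add_cancel]

theorem exists_eq_rescale_exp_mul_one_add_X_pow_mul {g : K⟦X⟧} {c : K} {p : ℕ}
    (h : ∀ n < p, PowerSeries.coeff n g = c ^ n / n !) :
    ∃ τ : K⟦X⟧, g = PowerSeries.rescale c (PowerSeries.exp K) * (1 + PowerSeries.X ^ p * τ) ∧
      PowerSeries.constantCoeff τ = PowerSeries.coeff p g - c ^ p / p ! := by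
  obtain ⟨ρ, hρ⟩ : PowerSeries.X ^ p ∣ g - PowerSeries.rescale c (PowerSeries.exp K) :=
    PowerSeries.X_pow_dvd_iff.2 fun n hn => by rw [map_sub, h n hn, coeff_rescale_exp, sub_self]
  refine ⟨ρ * PowerSeries.rescale (-c) (PowerSeries.exp K), ?_, ?_⟩
  · have hexp : PowerSeries.rescale c (PowerSeries.exp K) *
        PowerSeries.rescale (-c) (PowerSeries.exp K) = 1 := by
      simp [PowerSeries.exp_mul_exp_eq_exp_add]
    linear_combination hρ - PowerSeries.X ^ p * ρ * hexp
  · have := congrArg (PowerSeries.coeff p) hρ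
    simp only [map_sub, coeff_rescale_exp, PowerSeries.coeff_X_pow_mul', le_refl, if_true,
      Nat.sub_self, PowerSeries.coeff_zero_eq_constantCoeff_apply] at this
    rw [map_mul, ← this, ← PowerSeries.coeff_zero_eq_constantCoeff_apply, coeff_rescale_exp]
    simp

end Exp

/-- The power series `exp(β X^p)`. -/
noncomputable def expXPow {K : Type*} [Field K] (β : K) (p : ℕ) : K⟦X⟧ :=
  PowerSeries.mk fun n => if p ∣ n then β ^ (n / p) / (n / p)! else 0

theorem coeff_expXPow {K : Type*} [Field K] (β : K) {p : ℕ} (hp : 0 < p) (n : ℕ) :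
    PowerSeries.coeff n (expXPow β p) =
      ∑ i ∈ range (n + 1), if p * i = n then β ^ i / i ! else 0 := by
  rw [expXPow, PowerSeries.coeff_mk]
  split_ifs with hdvd
  · obtain ⟨i, rfl⟩ := hdvd
    rw [sum_eq_single i (fun j _ hj => if_neg fun h => hj (Nat.eq_of_mul_eq_mul_left hp h))
      (fun hi => absurd (mem_range.2 (by nlinarith)) hi), if_pos rfl, Nat.mul_div_cancel_left _ hp]
  · exact (sum_eq_zero fun i _ => if_neg fun h => hdvd ⟨i, h.symm⟩).symm

theorem diffOp_expXPow_X_pow (β : ℂ) {p : ℕ} (hp : 0 < p) (d : ℕ) :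
    diffOp (expXPow β p) (X ^ d) = expD β p d := by
  have himage : (range (d / p + 1)).image (p * ·) = (range (d + 1)).filter (p ∣ ·) := by
    ext n
    simp only [mem_image, mem_filter, mem_range, Nat.lt_succ_iff, Nat.le_div_iff_mul_le hp]
    constructor
    · rintro ⟨k, hk, rfl⟩
      exact ⟨by linarith, dvd_mul_right p k⟩
    · rintro ⟨hn, k, rfl⟩
      exact ⟨k, by linarith, rfl⟩
  rw [diffOp_eq_sum (natDegree_X_pow_le d), expD]
  simp only [expXPow, PowerSeries.coeff_mk, ite_smul, zero_smul]
  rw [← sum_filter, ← himage, sum_image fun a _ b _ h => Nat.eq_of_mul_eq_mul_left hp h]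
  refine sum_congr rfl fun k hk => ?_
  have hpk : p * k ≤ d := by
    rw [mem_range, Nat.lt_succ_iff, Nat.le_div_iff_mul_le hp] at hk; linarith
  rw [Nat.mul_div_cancel_left k hp, iterate_derivative_X_pow_eq_smul, smul_smul, smul_eq_C_mul]
  congr 2
  rw [← Nat.factorial_mul_descFactorial hpk]
  push_cast
  field_simp [(d - p * k).factorial_ne_zero]

theorem tendsto_natCast_rpow_of_neg {e : ℝ} (he : e < 0) :
    Tendsto (fun m : ℕ => (m : ℝ) ^ e) atTop (𝓝 0) := by
  have := (tendsto_rpow_neg_atTop (neg_pos.2 he)).comp tendsto_natCast_atTop_atTop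
  simpa only [neg_neg, Function.comp_def] using this

theorem tendsto_choose_div_pow (i : ℕ) :
    Tendsto (fun m : ℕ => (m.choose i : ℝ) / (m : ℝ) ^ i) atTop (𝓝 (i ! : ℝ)⁻¹) := by
  refine ((isEquivalent_choose i).div IsEquivalent.refl).symm.tendsto_nhds
    (tendsto_const_nhds.congr' ?_)
  filter_upwards [eventually_ge_atTop 1] with m hm
  simp only [Pi.div_apply]
  field_simp [show (m : ℝ) ≠ 0 by positivity]

theorem tendsto_rpow_mul_choose {p i n : ℕ} (hp : 0 < p) (h : p * i ≤ n) :
    Tendsto (fun m : ℕ => (m : ℝ) ^ (-(n : ℝ) / p) * m.choose i) atTop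
      (𝓝 (if p * i = n then (i ! : ℝ)⁻¹ else 0)) := by
  have hpow : Tendsto (fun m : ℕ => (m : ℝ) ^ ((i : ℝ) - n / p)) atTop
      (𝓝 (if p * i = n then 1 else 0)) := by
    split_ifs with hin
    · have : (i : ℝ) - n / p = 0 := by rw [← hin]; push_cast; field_simp; ring
      simp [this]
    · refine tendsto_natCast_rpow_of_neg ?_
      have : (p * i : ℝ) < n := by exact_mod_cast lt_of_le_of_ne h hin
      rw [sub_neg, lt_div_iff₀ (by positivity)]
      linarith
  convert (tendsto_choose_div_pow i).mul hpow |>.congr' ?_ using 2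
  · split_ifs <;> simp
  · filter_upwards [eventually_ge_atTop 1] with m hm
    have hm : (0 : ℝ) < m := by positivity
    rw [Real.rpow_sub hm, Real.rpow_natCast, neg_div, Real.rpow_neg hm.le]
    field_simp

theorem tendsto_rpow_mul_coeff_one_add_X_pow_mul_pow {p : ℕ} (hp : 0 < p) (τ : ℂ⟦X⟧) (n : ℕ) :
    Tendsto (fun m : ℕ => (((m : ℝ) ^ (-(n : ℝ) / p) : ℝ) : ℂ) *
        PowerSeries.coeff n ((1 + PowerSeries.X ^ p * τ) ^ m)) atTop
      (𝓝 (PowerSeries.coeff n (expXPow (PowerSeries.constantCoeff τ) p))) := by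
  have hX : PowerSeries.X ∣ PowerSeries.X ^ p * τ := dvd_mul_of_dvd_left (dvd_pow_self _ hp.ne') _
  simp_rw [coeff_one_add_pow hX, mul_sum, coeff_expXPow _ hp]
  refine tendsto_finsetSum _ fun i _ => ?_
  rw [mul_pow, ← pow_mul, PowerSeries.coeff_X_pow_mul']
  by_cases hin : p * i ≤ n
  · have hlim := ((Complex.continuous_ofReal.tendsto _).comp
      (tendsto_rpow_mul_choose hp hin)).mul_const (PowerSeries.coeff (n - p * i) (τ ^ i))
    simp only [if_pos hin]
    convert hlim using 1
    · ext m
      simp only [Function.comp_apply, Complex.ofReal_mul, Complex.ofReal_natCast]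
      ring
    · split_ifs with h
      · simp [h, div_eq_mul_inv, mul_comm]
      · simp
  · simp [hin, show p * i ≠ n by omega]

theorem tendsto_rpow_mul_coeff_of_monic {p : ℕ} (hp : 0 < p) {f : ℂ[X]} (hf : f.Monic) (j : ℕ) :
    Tendsto (fun m : ℕ => (((m : ℝ) ^ (((j : ℝ) - f.natDegree) / p) : ℝ) : ℂ) * f.coeff j) atTop
      (𝓝 ((X ^ f.natDegree : ℂ[X]).coeff j)) := by
  rw [coeff_X_pow]
  rcases lt_trichotomy j f.natDegree with h | rfl | h
  · have hneg : ((j : ℝ) - f.natDegree) / p < 0 :=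
      div_neg_of_neg_of_pos (by simpa using h) (by positivity)
    simpa [h.ne] using ((Complex.continuous_ofReal.tendsto 0).comp
      (tendsto_natCast_rpow_of_neg hneg)).mul_const (f.coeff j)
  · simp [hf.coeff_natDegree]
  · simp [h.ne', coeff_eq_zero_of_natDegree_lt h]

theorem tendsto_rpow_mul_coeff_diffOp {p : ℕ} (hp : 0 < p) (τ : ℂ⟦X⟧) {f : ℂ[X]} (hf : f.Monic)
    (k : ℕ) :
    Tendsto (fun m : ℕ => (((m : ℝ) ^ (((k : ℝ) - f.natDegree) / p) : ℝ) : ℂ) *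
        (diffOp ((1 + PowerSeries.X ^ p * τ) ^ m) f).coeff k) atTop
      (𝓝 ((diffOp (expXPow (PowerSeries.constantCoeff τ) p) (X ^ f.natDegree)).coeff k)) := by
  set d := f.natDegree
  rw [coeff_diffOp (natDegree_X_pow_le d)]
  refine (tendsto_finsetSum _ fun n _ => (tendsto_rpow_mul_coeff_one_add_X_pow_mul_pow hp τ n).mul
    ((tendsto_rpow_mul_coeff_of_monic hp hf (k + n)).const_mul _)).congr' ?_
  filter_upwards [eventually_ge_atTop 1] with m hm
  have hm : (0 : ℝ) < m := by positivity
  rw [coeff_diffOp le_rfl, mul_sum]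
  refine sum_congr rfl fun n _ => ?_
  -- the weight is shared out as `m^{-n/p}` for `ψ^m` and `m^{(k+n-d)/p}` for `f`
  have hsplit : (m : ℝ) ^ (((k : ℝ) - d) / p) =
      (m : ℝ) ^ (-(n : ℝ) / p) * (m : ℝ) ^ ((((k + n : ℕ) : ℝ) - d) / p) := by
    rw [← Real.rpow_add hm]; push_cast; ring_nf
  rw [hsplit, Complex.ofReal_mul]
  ring

theorem natDegree_C_mul_comp_C_mul_X_le {R : Type*} [Semiring R] (a b : R) (q : R[X]) :
    (C a * q.comp (C b * X)).natDegree ≤ q.natDegree := by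
  refine (natDegree_C_mul_le _ _).trans (natDegree_comp_le.trans ?_)
  simpa using Nat.mul_le_mul_left q.natDegree ((natDegree_C_mul_le b X).trans natDegree_X_le)

theorem tendsto_coeff_rescale_diffOp {p : ℕ} (hp : 0 < p) (τ : ℂ⟦X⟧) {f : ℂ[X]} (hf : f.Monic)
    (k : ℕ) :
    Tendsto (fun m : ℕ => (C ((((m : ℝ) ^ (-(f.natDegree : ℝ) / p) : ℝ) : ℂ)) *
        (diffOp ((1 + PowerSeries.X ^ p * τ) ^ m) f).comp
          (C ((((m : ℝ) ^ ((1 : ℝ) / p) : ℝ) : ℂ)) * X)).coeff k) atTop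
      (𝓝 ((diffOp (expXPow (PowerSeries.constantCoeff τ) p) (X ^ f.natDegree)).coeff k)) := by
  refine (tendsto_rpow_mul_coeff_diffOp hp τ hf k).congr' ?_
  filter_upwards [eventually_ge_atTop 1] with m hm
  have hm : (0 : ℝ) < m := by positivity
  have hscale : (m : ℝ) ^ (((k : ℝ) - f.natDegree) / p) =
      (m : ℝ) ^ (-(f.natDegree : ℝ) / p) * ((m : ℝ) ^ ((1 : ℝ) / p)) ^ k := by
    rw [← Real.rpow_natCast, ← Real.rpow_mul hm.le, ← Real.rpow_add hm]
    ring_nf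
  rw [coeff_C_mul, comp_C_mul_X_coeff, hscale, Complex.ofReal_mul, Complex.ofReal_pow]
  ring

theorem tendstoLocallyUniformly_eval_of_tendsto_coeff {𝕜 ι : Type*} [NormedField 𝕜]
    {l : Filter ι} {P : ι → 𝕜[X]} {Q : 𝕜[X]} {N : ℕ} (hP : ∀ i, (P i).natDegree ≤ N)
    (hQ : Q.natDegree ≤ N) (h : ∀ k, Tendsto (fun i => (P i).coeff k) l (𝓝 (Q.coeff k))) :
    TendstoLocallyUniformly (fun i x => (P i).eval x) Q.eval l := by
  have hconst (g : 𝕜 → 𝕜) : TendstoLocallyUniformly (fun (_ : ι) => g) g l :=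
    fun _ hu _ =>
      ⟨Set.univ, Filter.univ_mem, Eventually.of_forall fun _ _ _ => refl_mem_uniformity hu⟩
  have hsum (s : Finset ℕ) : TendstoLocallyUniformly (fun i x => ∑ k ∈ s, (P i).coeff k * x ^ k)
      (fun x => ∑ k ∈ s, Q.coeff k * x ^ k) l := by
    induction s using Finset.induction_on with
    | empty => simpa using hconst fun _ => 0
    | insert k s hk ih =>
      simp only [sum_insert hk]
      exact (((h k).tendstoUniformly_const.tendstoLocallyUniformly.fun_mul₀ (hconst (· ^ k))
        continuous_const (continuous_pow k))).fun_add ih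
  have hP' (i : ι) : (P i).eval = fun x => ∑ k ∈ range (N + 1), (P i).coeff k * x ^ k :=
    funext (eval_eq_sum_range' (Nat.lt_succ_of_le (hP i)))
  rw [funext hP', funext (eval_eq_sum_range' (Nat.lt_succ_of_le hQ))]
  exact hsum _

theorem stmt3_general (α : ℕ → ℂ) (h0 : α 0 = 1)
    (p : ℕ) (hp2 : 2 ≤ p)
    (hpmin : ∀ n, 2 ≤ n → n < p → (n ! : ℂ) * α n = (α 1) ^ n)
    (f : Polynomial ℂ) (hf : f.Monic) (d : ℕ) (hd : f.natDegree = d) :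
    TendstoLocallyUniformly
      (fun (m : ℕ) (x : ℂ) =>
        ((((m : ℝ) ^ (-(d : ℝ) / (p : ℝ))) : ℝ) : ℂ) *
          (((phiD α)^[m] f).eval
            (((((m : ℝ) ^ ((1 : ℝ) / (p : ℝ))) : ℝ) : ℂ) * x - (m : ℂ) * α 1)))
      (fun x => (expD (α p - (α 1) ^ p / (p ! : ℂ)) p d).eval x) Filter.atTop := by
  subst hd
  have hp : 0 < p := by omega
  have hα : ∀ n < p, PowerSeries.coeff n (PowerSeries.mk α) = α 1 ^ n / n ! := by
    intro n hn
    rw [PowerSeries.coeff_mk]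
    rcases n with _ | _ | n
    · simp [h0]
    · simp
    · rw [eq_div_iff (mod_cast factorial_ne_zero _), mul_comm, hpmin _ (by omega) hn]
  obtain ⟨τ, hφ, hτ⟩ := exists_eq_rescale_exp_mul_one_add_X_pow_mul hα
  rw [PowerSeries.coeff_mk] at hτ
  have hphiD : phiD α = diffOp (PowerSeries.mk α) :=
    funext fun g => by simp only [phiD, diffOp, PowerSeries.coeff_mk]
  rw [← hτ, ← diffOp_expXPow_X_pow _ hp]
  -- once the shift by `m α₁` has absorbed `e^{α₁ X}`, `f_m` is this rescaling of `ψ(D)^m f`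
  refine (tendstoLocallyUniformly_eval_of_tendsto_coeff
    (fun m => (natDegree_C_mul_comp_C_mul_X_le _ _ _).trans (natDegree_diffOp_le _ f))
    ((natDegree_diffOp_le _ _).trans (natDegree_X_pow_le _))
    (tendsto_coeff_rescale_diffOp hp τ hf)).congr fun m x => ?_
  simp [hphiD, ← diffOp_pow, hφ, eval_sub_diffOp_rescale_exp_mul_pow]

/-- Theorem 2.1: with `p = min{n ≥ 2 : n!·αₙ ≠ α₁ⁿ}`, `α = α₁`, `β = αₚ − α₁ᵖ/p!`, and `f`
monic of degree `d`, the rescaled polynomials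
`f_m(x) = m^{−d/p}·(φ(D)^m f)(m^{1/p}x − mα)` converge to `exp(βD^p)M^d`
uniformly on compact subsets of `ℂ`. -/
theorem stmt3 (α : ℕ → ℂ) (h0 : α 0 = 1)
    (p : ℕ) (hp2 : 2 ≤ p)
    (hpne : (p ! : ℂ) * α p ≠ (α 1) ^ p)
    (hpmin : ∀ n, 2 ≤ n → n < p → (n ! : ℂ) * α n = (α 1) ^ n)
    (f : Polynomial ℂ) (hf : f.Monic) (d : ℕ) (hd : f.natDegree = d) :
    TendstoLocallyUniformly
      (fun (m : ℕ) (x : ℂ) =>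
        ((((m : ℝ) ^ (-(d : ℝ) / (p : ℝ))) : ℝ) : ℂ) *
          (((phiD α)^[m] f).eval
            (((((m : ℝ) ^ ((1 : ℝ) / (p : ℝ))) : ℝ) : ℂ) * x - (m : ℂ) * α 1)))
      (fun x => (expD (α p - (α 1) ^ p / (p ! : ℂ)) p d).eval x) Filter.atTop :=
  stmt3_general α h0 p hp2 hpmin f hf d hd
end

section
/- Let φ be a formal power series with complex coefficients, let f and g be complex polynomials such that neither φ(D)f nor φ(D)g is identically 0, let a₁, …, a_N be zeros of φ(D)f and let b be a zero of φ(D)g. Then for every c ∈ ℂ the polynomial φ(D)(f·T^c g) is not identically 0, and for every ε > 0 there is an R > 0 such that whenever |c| > R, the polynomial φ(D)(f·T^c g) has a zero in each of the open disks D(a₁; ε), …, D(a_N; ε), and also a zero in the open disk D(b − c; ε). -/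
open Polynomial

/-- The translate `T^c g`, i.e. `(T^c g)(x) = g(x + c)`. -/
noncomputable def transl (c : ℂ) (g : Polynomial ℂ) : Polynomial ℂ :=
  g.comp (Polynomial.X + Polynomial.C c)

/-!
Fix `x`. By the Leibniz rule, `c ↦ φ(D)(f · T^c g)(x)` is a polynomial in `c` of degree at most
`deg g` whose coefficient of `c ^ deg g` is `lc(g) · φ(D)f(x)`. So if `φ(D)f(a) = 0` and
`φ(D)f(a') ≠ 0` with `|a' - a| < ε`, then `P = φ(D)(f · T^c g)` satisfies `|P(a)| = o(|P(a')|)` as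
`|c| → ∞`. On the other hand, if no root of `P` lies within `ε` of `a`, comparing the factorisations
`P(x) = lc(P) ∏ (x - zⱼ)` at `a` and `a'` gives `|P(a')| ≤ 2 ^ deg P · |P(a)|`, with
`deg P ≤ deg f + deg g` independent of `c`. The zero near `b - c` follows by symmetry, since `T^{-c}`
carries `φ(D)(f · T^c g)` to `φ(D)(g · T^{-c} f)`. For the nonvanishing, if `k` is the order of `φ`
then the coefficient of `φ(D)p` in degree `deg p - k` is `αₖ · deg p ⋯ (deg p - k + 1) · lc(p)`.
-/

open Filter Bornology Finset

lemma Polynomial.iterate_derivative_taylor {R : Type*} [CommSemiring R] (r : R) (p : R[X]) (n : ℕ) :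
    derivative^[n] (taylor r p) = taylor r (derivative^[n] p) := by
  induction n with
  | zero => rfl
  | succ n ih =>
    rw [Function.iterate_succ_apply', ih, Function.iterate_succ_apply', taylor_apply,
      taylor_apply, derivative_comp]
    simp only [derivative_add, derivative_X, derivative_C, add_zero, one_mul]

lemma Polynomial.Splits.norm_eval_le_two_pow_mul_norm_eval {K : Type*} [NormedField K]
    {p : K[X]} (hp : p.Splits) {a a' : K} {ε : ℝ} (ha' : ‖a' - a‖ ≤ ε)
    (hroots : ∀ z, p.IsRoot z → ε ≤ ‖z - a‖) :
    ‖p.eval a'‖ ≤ 2 ^ p.natDegree * ‖p.eval a‖ := by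
  have hnorm : ∀ x, ‖p.eval x‖ = ‖p.leadingCoeff‖ * (p.roots.map fun z => ‖x - z‖).prod := by
    intro x
    rw [hp.eval_eq_prod_roots, norm_mul]
    exact congrArg _ (p.roots.prod_hom' (normHom : K →*₀ ℝ) _).symm
  have hfactor : ∀ z ∈ p.roots, ‖a' - z‖ ≤ 2 * ‖a - z‖ := fun z hz => by
    have := hroots z (isRoot_of_mem_roots hz)
    calc ‖a' - z‖ ≤ ‖a' - a‖ + ‖a - z‖ := norm_sub_le_norm_sub_add_norm_sub a' a z
      _ ≤ 2 * ‖a - z‖ := by rw [norm_sub_rev a z] at *; linarith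
  rw [hnorm, hnorm, hp.natDegree_eq_card_roots, mul_left_comm]
  gcongr
  calc (p.roots.map fun z => ‖a' - z‖).prod ≤ (p.roots.map fun z => 2 * ‖a - z‖).prod :=
        Multiset.prod_map_le_prod_map₀ _ _ (fun _ _ => norm_nonneg _) hfactor
    _ = 2 ^ p.roots.card * (p.roots.map fun z => ‖a - z‖).prod := by
        rw [Multiset.prod_map_mul, Multiset.map_const', Multiset.prod_replicate]

lemma Filter.Eventually.exists_forall_lt_norm {E : Type*} [SeminormedAddGroup E] {P : E → Prop}
    (h : ∀ᶠ x in cobounded E, P x) : ∃ R : ℝ, 0 < R ∧ ∀ x, R < ‖x‖ → P x := by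
  obtain ⟨r, -, hr⟩ := hasBasis_cobounded_norm.eventually_iff.1 h
  exact ⟨max r 1, by positivity, fun x hx => hr ((le_max_left r 1).trans hx.le)⟩

section PhiD

variable {α : ℕ → ℂ}

lemma transl_eq_taylor (c : ℂ) (g : ℂ[X]) : transl c g = taylor c g :=
  (taylor_apply c g).symm

lemma ne_zero_of_phiD_ne_zero {p : ℂ[X]} (h : phiD α p ≠ 0) : p ≠ 0 := by
  rintro rfl
  simp [phiD] at h

lemma phiD_eq_sum_range {p : ℂ[X]} {M : ℕ} (hM : p.natDegree < M) :
    phiD α p = ∑ n ∈ range M, α n • derivative^[n] p := by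
  refine sum_subset (range_subset_range.2 hM) fun n _ hn => ?_
  rw [iterate_derivative_eq_zero (by simpa using hn), smul_zero]

lemma natDegree_phiD_le (α : ℕ → ℂ) (p : ℂ[X]) : (phiD α p).natDegree ≤ p.natDegree :=
  natDegree_sum_le_of_forall_le _ _ fun _ _ =>
    (natDegree_smul_le _ _).trans ((natDegree_iterate_derivative _ _).trans (Nat.sub_le _ _))

lemma natDegree_mul_transl_le (f g : ℂ[X]) (c : ℂ) :
    (f * transl c g).natDegree ≤ f.natDegree + g.natDegree := by
  rw [transl_eq_taylor, ← natDegree_taylor g c]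
  exact natDegree_mul_le

lemma phiD_taylor (r : ℂ) (p : ℂ[X]) : phiD α (taylor r p) = taylor r (phiD α p) := by
  simp only [phiD, natDegree_taylor, map_sum, map_smul, iterate_derivative_taylor]

lemma exists_ne_zero_of_phiD_ne_zero {p : ℂ[X]} (h : phiD α p ≠ 0) :
    ∃ n ≤ p.natDegree, α n ≠ 0 := by
  contrapose! h
  exact sum_eq_zero fun n hn => by
    rw [h n (Nat.lt_succ_iff.1 (mem_range.1 hn)), zero_smul]

lemma coeff_phiD_natDegree_sub {p : ℂ[X]} {k : ℕ} (hk : k ≤ p.natDegree)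
    (hmin : ∀ n < k, α n = 0) :
    (phiD α p).coeff (p.natDegree - k) = α k * p.natDegree.descFactorial k * p.leadingCoeff := by
  rw [phiD, finsetSum_coeff, sum_eq_single k]
  · rw [coeff_smul, coeff_iterate_derivative, Nat.sub_add_cancel hk, smul_eq_mul, nsmul_eq_mul,
      leadingCoeff, mul_assoc]
  · intro n _ hne
    rcases hne.lt_or_gt with h | h
    · rw [hmin n h, zero_smul, coeff_zero]
    · rw [coeff_smul, coeff_iterate_derivative, coeff_eq_zero_of_natDegree_lt (by omega),
        smul_zero, smul_zero]
  · exact fun h => absurd (mem_range.2 (by omega)) h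

lemma phiD_ne_zero {p : ℂ[X]} (hp : p ≠ 0) {n : ℕ} (hn : n ≤ p.natDegree) (hα : α n ≠ 0) :
    phiD α p ≠ 0 := by
  classical
  have hex : ∃ n, α n ≠ 0 := ⟨n, hα⟩
  have hk : Nat.find hex ≤ p.natDegree := (Nat.find_min' hex hα).trans hn
  have hcoeff := coeff_phiD_natDegree_sub hk fun m hm => not_not.1 (Nat.find_min hex hm)
  refine fun h => ?_
  rw [h, coeff_zero, eq_comm] at hcoeff
  refine mul_ne_zero (mul_ne_zero (Nat.find_spec hex) ?_) (leadingCoeff_ne_zero.2 hp) hcoeff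
  exact Nat.cast_ne_zero.2 fun h => (Nat.descFactorial_eq_zero_iff_lt.1 h).not_ge hk

lemma phiD_mul_transl_ne_zero {f g : ℂ[X]} (hf : phiD α f ≠ 0) (hg : g ≠ 0) (c : ℂ) :
    phiD α (f * transl c g) ≠ 0 := by
  obtain ⟨n, hn, hα⟩ := exists_ne_zero_of_phiD_ne_zero hf
  have hf0 := ne_zero_of_phiD_ne_zero hf
  have hg0 : transl c g ≠ 0 := by rwa [transl_eq_taylor, Ne, taylor_eq_zero]
  refine phiD_ne_zero (mul_ne_zero hf0 hg0) ?_ hα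
  rw [natDegree_mul hf0 hg0]
  omega

lemma phiD_mul_transl_neg_eq_taylor (f g : ℂ[X]) (c : ℂ) :
    phiD α (g * transl (-c) f) = taylor (-c) (phiD α (f * transl c g)) := by
  rw [← phiD_taylor, transl_eq_taylor, transl_eq_taylor, taylor_mul, taylor_taylor,
    neg_add_cancel, taylor_zero, mul_comm]

end PhiD

section MulTransl

variable (α : ℕ → ℂ) (f g : ℂ[X])

noncomputable def phiDMulTranslPoly (x : ℂ) : ℂ[X] :=
  ∑ n ∈ range (f.natDegree + g.natDegree + 1), α n • ∑ k ∈ range (n + 1),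
    ((n.choose k : ℂ) * (derivative^[n - k] f).eval x) • taylor x (derivative^[k] g)

lemma eval_phiDMulTranslPoly (x c : ℂ) :
    (phiDMulTranslPoly α f g x).eval c = (phiD α (f * transl c g)).eval x := by
  rw [phiD_eq_sum_range (Nat.lt_succ_of_le (natDegree_mul_transl_le f g c)), phiDMulTranslPoly,
    transl_eq_taylor]
  simp only [eval_finsetSum, eval_smul, iterate_derivative_mul, iterate_derivative_taylor,
    eval_mul, eval_natCast, taylor_eval, smul_eq_mul, nsmul_eq_mul, add_comm c x]
  refine sum_congr rfl fun n _ => congrArg _ (sum_congr rfl fun k _ => ?_)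
  ring

lemma natDegree_phiDMulTranslPoly_le (x : ℂ) :
    (phiDMulTranslPoly α f g x).natDegree ≤ g.natDegree := by
  refine natDegree_sum_le_of_forall_le _ _ fun _ _ => (natDegree_smul_le _ _).trans ?_
  refine natDegree_sum_le_of_forall_le _ _ fun _ _ => (natDegree_smul_le _ _).trans ?_
  rw [natDegree_taylor]
  exact (natDegree_iterate_derivative _ _).trans (Nat.sub_le _ _)

lemma coeff_taylor_iterate_derivative_natDegree (x : ℂ) (k : ℕ) :
    (taylor x (derivative^[k] g)).coeff g.natDegree = if k = 0 then g.leadingCoeff else 0 := by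
  split_ifs with hk
  · rw [hk, Function.iterate_zero_apply, ← natDegree_taylor g x, coeff_natDegree,
      leadingCoeff_taylor]
  · refine coeff_eq_zero_of_degree_lt ?_
    rw [degree_taylor]
    rcases Nat.eq_zero_or_pos g.natDegree with h0 | hpos
    · rw [iterate_derivative_eq_zero (by omega), degree_zero, h0]
      exact WithBot.bot_lt_coe 0
    · exact degree_le_natDegree.trans_lt
        (by exact_mod_cast (natDegree_iterate_derivative g k).trans_lt (by omega))

lemma coeff_phiDMulTranslPoly_natDegree (x : ℂ) :
    (phiDMulTranslPoly α f g x).coeff g.natDegree = g.leadingCoeff * (phiD α f).eval x := by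
  rw [phiD_eq_sum_range (M := f.natDegree + g.natDegree + 1) (by omega), eval_finsetSum,
    mul_sum, phiDMulTranslPoly, finsetSum_coeff]
  refine sum_congr rfl fun n _ => ?_
  simp only [coeff_smul, finsetSum_coeff, coeff_taylor_iterate_derivative_natDegree,
    smul_eq_mul, mul_ite, mul_zero, sum_ite_eq', mem_range, Nat.choose_zero_right, Nat.sub_zero,
    if_pos n.succ_pos, eval_smul]
  ring

end MulTransl

lemma eventually_exists_isRoot_phiD_mul_transl {α : ℕ → ℂ} {f g : ℂ[X]} (hf : phiD α f ≠ 0)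
    (hg : g ≠ 0) {a : ℂ} (ha : (phiD α f).IsRoot a) {ε : ℝ} (hε : 0 < ε) :
    ∀ᶠ c in cobounded ℂ, ∃ z, (phiD α (f * transl c g)).IsRoot z ∧ ‖z - a‖ < ε := by
  obtain ⟨a', ha'a, ha'⟩ : ∃ a' ∈ Metric.ball a ε, ¬(phiD α f).IsRoot a' :=
    ((infinite_of_mem_nhds a (Metric.ball_mem_nhds a hε)).sdiff
      (finite_setOfPred_isRoot hf)).nonempty
  rw [Metric.mem_ball, dist_eq_norm] at ha'a
  set u := phiDMulTranslPoly α f g a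
  set v := phiDMulTranslPoly α f g a'
  have hu : u.degree < g.natDegree := by
    refine (degree_lt_iff_coeff_zero _ _).2 fun m hm => ?_
    rcases hm.eq_or_lt with rfl | hlt
    · rw [coeff_phiDMulTranslPoly_natDegree, ha.eq_zero, mul_zero]
    · exact coeff_eq_zero_of_natDegree_lt ((natDegree_phiDMulTranslPoly_le α f g a).trans_lt hlt)
  have hv : v.degree = g.natDegree :=
    degree_eq_of_le_of_coeff_ne_zero
      (degree_le_of_natDegree_le (natDegree_phiDMulTranslPoly_le α f g a'))
      (by rw [coeff_phiDMulTranslPoly_natDegree]; exact mul_ne_zero (leadingCoeff_ne_zero.2 hg) ha')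
  have hsmall := (isLittleO_cobounded_of_degree_lt (hu.trans_eq hv.symm)).def
    (show (0 : ℝ) < (2 ^ (f.natDegree + g.natDegree + 1))⁻¹ by positivity)
  filter_upwards [hsmall] with c hc
  rw [eval_phiDMulTranslPoly, eval_phiDMulTranslPoly] at hc
  set p := phiD α (f * transl c g)
  by_contra! hfar
  have hle := (IsAlgClosed.splits p).norm_eval_le_two_pow_mul_norm_eval ha'a.le hfar
  have hdeg : p.natDegree ≤ f.natDegree + g.natDegree :=
    (natDegree_phiD_le α _).trans (natDegree_mul_transl_le f g c)
  have hpa' : 0 < ‖p.eval a'‖ := norm_pos_iff.2 fun h => (hfar a' h).not_gt ha'a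
  have : ‖p.eval a'‖ ≤ ‖p.eval a'‖ / 2 := calc
    ‖p.eval a'‖ ≤ 2 ^ p.natDegree * ‖p.eval a‖ := hle
    _ ≤ 2 ^ (f.natDegree + g.natDegree) * ((2 ^ (f.natDegree + g.natDegree + 1))⁻¹ *
        ‖p.eval a'‖) := by gcongr; exact one_le_two
    _ = ‖p.eval a'‖ / 2 := by rw [pow_succ]; field_simp
  linarith

/-- Lemma 3.3: if neither `φ(D)f` nor `φ(D)g` is identically `0`, `a₁,…,a_N` are zeros of
`φ(D)f` and `b` is a zero of `φ(D)g`, then `φ(D)(f·T^c g)` is never identically `0`, and for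
every `ε > 0` there is `R > 0` such that whenever `|c| > R`, `φ(D)(f·T^c g)` has a zero in
each disk `D(aᵢ; ε)` and a zero in `D(b − c; ε)`. -/
theorem stmt14 (α : ℕ → ℂ) (f g : Polynomial ℂ)
    (hf : phiD α f ≠ 0) (hg : phiD α g ≠ 0)
    (N : ℕ) (a : Fin N → ℂ) (ha : ∀ i, (phiD α f).IsRoot (a i))
    (b : ℂ) (hb : (phiD α g).IsRoot b) :
    (∀ c : ℂ, phiD α (f * transl c g) ≠ 0) ∧
    ∀ ε : ℝ, 0 < ε → ∃ R : ℝ, 0 < R ∧ ∀ c : ℂ, R < ‖c‖ →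
      (∀ i, ∃ z : ℂ, (phiD α (f * transl c g)).IsRoot z ∧ ‖z - a i‖ < ε) ∧
      (∃ z : ℂ, (phiD α (f * transl c g)).IsRoot z ∧ ‖z - (b - c)‖ < ε) := by
  have hf0 := ne_zero_of_phiD_ne_zero hf
  have hg0 := ne_zero_of_phiD_ne_zero hg
  refine ⟨phiD_mul_transl_ne_zero hf hg0, fun ε hε => Eventually.exists_forall_lt_norm ?_⟩
  have near_a := eventually_all.2 fun i =>
    eventually_exists_isRoot_phiD_mul_transl hf hg0 (ha i) hε
  have near_b := tendsto_neg_cobounded.eventually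
    (eventually_exists_isRoot_phiD_mul_transl hg hf0 hb hε)
  filter_upwards [near_a, near_b] with c hA ⟨z, hz, hzb⟩
  refine ⟨hA, z + -c, ?_, ?_⟩
  · rwa [IsRoot, phiD_mul_transl_neg_eq_taylor, taylor_eval] at hz
  · rwa [show z + -c - (b - c) = z - b by ring]
end
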